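/- Let λ > 0, q > 0 with 0 < q < 2λ, let ρ and ρ_c be real numbers, and set f = -K(ρ - ρ_c). Then there exists K ∈ (0, 2) such that max{-q, q - 2λ} ≤ f ≤ q, i.e., such that the control equation sin θ = (-f² - 2λf + q²)/(2λq) has a solution θ. -/

import Mathlib

/-!
Writing `f = -K(ρ - ρ_c)`, the admissible window `max{-q, q - 2λ} ≤ f ≤ q` contains the interval
`[-m, m]` with `m = min q (2λ - q) > 0`, and a small enough positive gain puts `f` in it. On the
window the right-hand side of the control equation lies in `[-1, 1]`, because
`2λq ± (-f² - 2λf + q²)` factor as `(q - f)(q + f + 2λ)` and `(q + f)(f - q + 2λ)`.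
-/

open Set

lemma exists_mem_Ioo_abs_mul_le (d : ℝ) {m : ℝ} (hm : 0 < m) :
    ∃ K ∈ Ioo (0 : ℝ) 2, |K * d| ≤ m := by
  have hmd : 0 < m + |d| := by positivity
  refine ⟨m / (m + |d|), ⟨by positivity, ?_⟩, ?_⟩
  · rw [div_lt_iff₀ hmd]
    linarith [abs_nonneg d]
  · rw [abs_mul, abs_of_pos (by positivity : 0 < m / (m + |d|)), div_mul_eq_mul_div,
      div_le_iff₀ hmd]
    nlinarith [abs_nonneg d]

lemma control_ratio_mem_Icc {lam q f : ℝ} (hlq : 0 < lam * q)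
    (hf : max (-q) (q - 2 * lam) ≤ f) (hfq : f ≤ q) :
    (-f ^ 2 - 2 * lam * f + q ^ 2) / (2 * lam * q) ∈ Icc (-1) 1 := by
  obtain ⟨hqf, hlf⟩ := max_le_iff.mp hf
  have hden : 0 < 2 * lam * q := by linarith
  constructor
  · rw [le_div_iff₀ hden]
    nlinarith [mul_nonneg (sub_nonneg.mpr hfq) (by linarith : 0 ≤ q + f + 2 * lam)]
  · rw [div_le_one hden]
    nlinarith [mul_nonneg (by linarith : 0 ≤ q + f) (by linarith : 0 ≤ f - q + 2 * lam)]

lemma exists_sin_eq_control_ratio {lam q f : ℝ} (hlq : 0 < lam * q)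
    (hf : max (-q) (q - 2 * lam) ≤ f) (hfq : f ≤ q) :
    ∃ θ : ℝ, Real.sin θ = (-f ^ 2 - 2 * lam * f + q ^ 2) / (2 * lam * q) := by
  have h := control_ratio_mem_Icc hlq hf hfq
  rwa [← Real.range_sin] at h

/-- For 0 < q < 2λ, there exists a gain K ∈ (0,2) such that
f = -K(ρ - ρ_c) satisfies max{-q, q-2λ} ≤ f ≤ q, so the control equation
sin θ = (-f² - 2λf + q²)/(2λq) has a solution θ. -/
theorem stmt3 (lam q ρ ρc : ℝ) (hlam : 0 < lam) (hq : 0 < q) (hq2 : q < 2 * lam) :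
    ∃ K : ℝ, K ∈ Set.Ioo (0 : ℝ) 2 ∧
      max (-q) (q - 2 * lam) ≤ -K * (ρ - ρc) ∧ -K * (ρ - ρc) ≤ q ∧
      ∃ θ : ℝ, Real.sin θ =
        (-(-K * (ρ - ρc)) ^ 2 - 2 * lam * (-K * (ρ - ρc)) + q ^ 2) / (2 * lam * q) := by
  set m := min q (2 * lam - q)
  have hm : 0 < m := lt_min hq (by linarith)
  obtain ⟨K, hK, hKd⟩ := exists_mem_Ioo_abs_mul_le (ρ - ρc) hm
  have hf := abs_le.mp (show |-K * (ρ - ρc)| ≤ m by rwa [neg_mul, abs_neg])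
  have hlow : max (-q) (q - 2 * lam) ≤ -K * (ρ - ρc) :=
    max_le (by linarith [min_le_left q (2 * lam - q)])
      (by linarith [min_le_right q (2 * lam - q)])
  have hup : -K * (ρ - ρc) ≤ q := hf.2.trans (min_le_left _ _)
  exact ⟨K, hK, hlow, hup, exists_sin_eq_control_ratio (mul_pos hlam hq) hlow hup⟩
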